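/- In the partition setting under Assumptions (D) and (B), fix p ≥ 1, q ≥ 1 and indices 1 ≤ j with j+1 < k ≤ n, and suppose δ ≥ 0 is such that ‖q̂_{j+1,k}(f)‖_{j+1,l,p} ≤ δ·M_{j+1,k}(l)·max_{r∈s_k(l)} ‖f‖_{k,r,q} for all l ∈ I_{j+1} and all bounded measurable f. Then for all i ∈ I_j and all bounded measurable f: ‖q_{j,k}(f)‖_{j,i,p} ≤ γ^{(p−1)/p}·δ·M_{j,k}(i)·max_{r∈s_k(i)} ‖f‖_{k,r,q}, and consequently ‖q_{j,k}(f)‖_{j,p} ≤ γ^{(p−1)/p}·δ·A_{j,k}·‖f‖_{k,q}. -/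

import Mathlib

/-!
On a cell `F_i` of level `j`, assumption (B) says `ḡ_{j,j+1} ≤ γ m` with `m = m_{j,j+1}(i)`, so
`|ḡ h|^p ≤ (γ m)^{p-1} ḡ |h|^p`. Integrating over `F_i` and using `ḡ_{j,j+1} μ_j = μ_{j+1}` gives
`‖ḡ h‖_{j,i,p} ≤ γ^{(p-1)/p} m ‖h‖_{μ_{j+1}|F_i, p}`, and since `F_i` is the disjoint union of
its children `l ∈ s_{j+1}(i)`, the last norm is at most the largest `‖h‖_{j+1,l,p}`. For
`h = q̂_{j+1,k}(K_k f)` these are bounded by hypothesis; under (D) and `μ_k K_k = μ_k`, Jensen's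
inequality shows that `K_k` does not increase any `‖·‖_{k,r,q}`, and
`m_{j,j+1}(i) M_{j+1,k}(l) ≤ M_{j,k}(i)` because the products defining `M` telescope along the tree.
-/

open MeasureTheory

variable {E : Type} [MeasurableSpace E]
variable {I : ℕ → Type} [∀ k, Fintype (I k)] [∀ k, Nonempty (I k)] [∀ k, DecidableEq (I k)]

/-- The restricted (normalized) measure μ_{k,j}: the restriction of `μ` to the
partition element `S`, normalized to a probability measure. -/
noncomputable def muLoc (μ : Measure E) (S : Set E) : Measure E := (μ S)⁻¹ • μ.restrict S

/-- The local L_p-norm ‖f‖_{k,j,p} = μ_{k,j}(|f|^p)^{1/p}. -/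
noncomputable def locNorm (ν : Measure E) (p : ℝ) (f : E → ℝ) : ℝ :=
  (∫ x, |f x| ^ p ∂ν) ^ (1/p)

/-- The norm ‖f‖_{k,p} = max_{j ∈ I_k} ‖f‖_{k,j,p}. -/
noncomputable def maxNorm (μ : ℕ → Measure E) (F : ∀ k, I k → Set E) (k : ℕ) (p : ℝ)
    (f : E → ℝ) : ℝ :=
  Finset.univ.sup' Finset.univ_nonempty fun j : I k => locNorm (muLoc (μ k) (F k j)) p f

/-- The relative mass change m_{k,k+1}(j) = μ_{k+1}(F_j)/μ_k(F_j). -/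
noncomputable def mRatio (μ : ℕ → Measure E) (F : ∀ k, I k → Set E) (k : ℕ) (j : I k) : ℝ :=
  (μ (k+1) (F k j)).toReal / (μ k (F k j)).toReal

/-- The successor set s_k(i) = {l ∈ I_k | p_j(l) = i} of i ∈ I_j. -/
def succSet (p : ∀ j k : ℕ, I k → I j) (j k : ℕ) (i : I j) : Finset (I k) :=
  Finset.univ.filter fun l => p j k l = i

/-- The product Π_{r=j}^{k-1} m_{r,r+1}(p_r(l)) of relative mass changes along
the branch leading to l ∈ I_k; its maximum over l ∈ s_k(i) is M_{j,k}(i). -/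
noncomputable def Mprod (μ : ℕ → Measure E) (F : ∀ k, I k → Set E) (p : ∀ j k : ℕ, I k → I j)
    (j k : ℕ) (l : I k) : ℝ :=
  ∏ r ∈ Finset.Ico j k, mRatio μ F r (p r k l)

/-- The propagator q_{j,k}(f) = ḡ_{j,j+1}·q̂_{j+1,k}(K_k(f)). -/
noncomputable def qFull (μ : ℕ → Measure E) (g : ℕ → E → ℝ) (K : ℕ → E → Measure E)
    (qhat : ℕ → ℕ → (E → ℝ) → E → ℝ) (j k : ℕ) (f : E → ℝ) : E → ℝ :=
  fun x => (g j x / (∫ z, g j z ∂(μ j))) * qhat (j+1) k (fun y => ∫ z, f z ∂(K k y)) x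

/-- The constant δ(2^r) = Π_{t=1}^{r} γ^{1-2^{-(t-1)}}/(1-α·γ^{2^t-2})^{2^{-t}}. -/
noncomputable def deltaP (α γ : ℝ) (r : ℕ) : ℝ :=
  ∏ t ∈ Finset.Icc 1 r,
    γ ^ (1 - (2:ℝ) ^ (1 - (t:ℝ))) / (1 - α * γ ^ ((2:ℝ) ^ t - 2)) ^ ((2:ℝ) ^ (-(t:ℝ)))

open ProbabilityTheory Set

section BoundedMeasurable

variable {α β : Type*} [MeasurableSpace α] [MeasurableSpace β]

def BddMeasurable (f : α → ℝ) : Prop := Measurable f ∧ ∃ C, ∀ x, |f x| ≤ C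

theorem BddMeasurable.integrable {f : α → ℝ} (hf : BddMeasurable f) (μ : Measure α)
    [IsFiniteMeasure μ] : Integrable f μ :=
  let ⟨C, hC⟩ := hf.2
  .of_bound hf.1.aestronglyMeasurable C (.of_forall hC)

theorem BddMeasurable.mul {f g : α → ℝ} (hf : BddMeasurable f) (hg : BddMeasurable g) :
    BddMeasurable fun x => f x * g x := by
  obtain ⟨C, hC⟩ := hf.2
  obtain ⟨D, hD⟩ := hg.2
  refine ⟨hf.1.mul hg.1, C * D, fun x => ?_⟩
  rw [abs_mul]
  exact mul_le_mul (hC x) (hD x) (abs_nonneg _) ((abs_nonneg _).trans (hC x))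

theorem BddMeasurable.div_const {f : α → ℝ} (hf : BddMeasurable f) (c : ℝ) :
    BddMeasurable fun x => f x / c := by
  simpa only [div_eq_mul_inv] using hf.mul ⟨measurable_const, |c⁻¹|, fun _ => le_rfl⟩

theorem BddMeasurable.abs_rpow {f : α → ℝ} (hf : BddMeasurable f) {p : ℝ} (hp : 0 ≤ p) :
    BddMeasurable fun x => |f x| ^ p := by
  obtain ⟨C, hC⟩ := hf.2
  refine ⟨hf.1.abs.pow_const p, C ^ p, fun x => ?_⟩
  rw [abs_of_nonneg (by positivity)]
  exact Real.rpow_le_rpow (abs_nonneg _) (hC x) hp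

theorem BddMeasurable.indicator {f : α → ℝ} (hf : BddMeasurable f) {s : Set α}
    (hs : MeasurableSet s) : BddMeasurable (s.indicator f) := by
  obtain ⟨C, hC⟩ := hf.2
  refine ⟨hf.1.indicator hs, C, fun x => ?_⟩
  by_cases hx : x ∈ s
  · simpa [hx] using hC x
  · simpa [hx] using (abs_nonneg _).trans (hC x)

theorem BddMeasurable.integral_kernel {f : β → ℝ} (hf : BddMeasurable f) (κ : Kernel α β)
    [IsMarkovKernel κ] : BddMeasurable fun x => ∫ y, f y ∂κ x := by
  obtain ⟨C, hC⟩ := hf.2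
  refine ⟨hf.1.stronglyMeasurable.integral_kernel.measurable, C, fun x => ?_⟩
  simpa using norm_integral_le_of_norm_le_const (μ := κ x) (f := f) (.of_forall hC)

end BoundedMeasurable

section KernelIntegral

variable {α : Type*} [MeasurableSpace α]

theorem abs_integral_rpow_le {ν : Measure α} [IsProbabilityMeasure ν] {f : α → ℝ} {q : ℝ}
    (hq : 1 ≤ q) (hf : Integrable f ν) (hfq : Integrable (fun x => |f x| ^ q) ν) :
    |∫ x, f x ∂ν| ^ q ≤ ∫ x, |f x| ^ q ∂ν :=
  calc |∫ x, f x ∂ν| ^ q ≤ (∫ x, |f x| ∂ν) ^ q :=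
        Real.rpow_le_rpow (abs_nonneg _) (abs_integral_le_integral_abs) (by linarith)
    _ ≤ ∫ x, |f x| ^ q ∂ν :=
        (convexOn_rpow hq).map_integral_le (Real.continuous_rpow_const (by linarith)).continuousOn
          isClosed_Ici (.of_forall fun x => abs_nonneg (f x)) hf.abs hfq

theorem integral_integral_kernel_of_comp_eq {μ : Measure α} {κ : Kernel α α} (hκμ : κ ∘ₘ μ = μ)
    {v : α → ℝ} (hv : Integrable v μ) : ∫ x, ∫ y, v y ∂κ x ∂μ = ∫ x, v x ∂μ := by
  rw [← hκμ] at hv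
  conv_rhs => rw [← hκμ]
  rw [Measure.comp_eq_comp_const_apply] at hv ⊢
  rw [Kernel.integral_comp hv, Kernel.const_apply]

/-- `hout` and `hin` make `κ` commute with multiplication by the indicator of `S`. -/
theorem setIntegral_integral_kernel_of_comp_eq {μ : Measure α} [IsFiniteMeasure μ]
    {κ : Kernel α α} [IsMarkovKernel κ] (hκμ : κ ∘ₘ μ = μ) {S : Set α} (hS : MeasurableSet S)
    (hout : ∀ x ∉ S, κ x S = 0) (hin : ∀ x ∈ S, κ x Sᶜ = 0) {u : α → ℝ} (hu : BddMeasurable u) :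
    ∫ x in S, ∫ y, u y ∂κ x ∂μ = ∫ x in S, u x ∂μ := by
  have hind : S.indicator (fun x => ∫ y, u y ∂κ x) = fun x => ∫ y, S.indicator u y ∂κ x := by
    funext x
    rw [integral_indicator hS]
    by_cases hx : x ∈ S
    · rw [indicator_of_mem hx, Measure.restrict_eq_self_of_ae_mem (mem_ae_iff.2 (hin x hx))]
    · rw [indicator_of_notMem hx, setIntegral_measure_zero _ (hout x hx)]
  rw [← integral_indicator hS, ← integral_indicator hS, hind,
    integral_integral_kernel_of_comp_eq hκμ ((hu.indicator hS).integrable μ)]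

theorem measure_compl_eq_zero_of_iUnion_eq_univ {ι : Type*} [Countable ι] {ν : Measure α}
    {F : ι → Set α} (hcover : ⋃ r, F r = univ) {r : ι} (h : ∀ r', r' ≠ r → ν (F r') = 0) :
    ν (F r)ᶜ = 0 := by
  refine measure_mono_null (fun x hx => ?_) (measure_iUnion_null fun r' =>
    measure_iUnion_null fun (hr' : r' ≠ r) => h r' hr')
  obtain ⟨r', hr'⟩ := mem_iUnion.1 (hcover ▸ mem_univ x : x ∈ ⋃ r, F r)
  exact mem_iUnion₂.2 ⟨r', fun h => hx (h ▸ hr'), hr'⟩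

end KernelIntegral

theorem locNorm_nonneg (ν : Measure E) (p : ℝ) (f : E → ℝ) : 0 ≤ locNorm ν p f :=
  Real.rpow_nonneg (integral_nonneg fun _ => Real.rpow_nonneg (abs_nonneg _) _) _

theorem integral_muLoc (ν : Measure E) (S : Set E) (w : E → ℝ) :
    ∫ x, w x ∂(muLoc ν S) = (ν S).toReal⁻¹ * ∫ x in S, w x ∂ν := by
  rw [muLoc, integral_smul_measure, ENNReal.toReal_inv, smul_eq_mul]

theorem locNorm_muLoc_le_iff {ν : Measure E} [IsFiniteMeasure ν] {S : Set E} (hS : ν S ≠ 0)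
    {p D : ℝ} (hp : 0 < p) (hD : 0 ≤ D) {h : E → ℝ} :
    locNorm (muLoc ν S) p h ≤ D ↔ ∫ x in S, |h x| ^ p ∂ν ≤ (ν S).toReal * D ^ p := by
  have hS' : 0 < (ν S).toReal := ENNReal.toReal_pos hS (measure_ne_top _ _)
  rw [locNorm, one_div, Real.rpow_inv_le_iff_of_pos _ hD hp, integral_muLoc,
    inv_mul_le_iff₀ hS']
  exact integral_nonneg fun _ => Real.rpow_nonneg (abs_nonneg _) _

theorem locNorm_integral_kernel_le {ι : Type*} [Countable ι] {μ : Measure E} [IsFiniteMeasure μ]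
    {κ : Kernel E E} [IsMarkovKernel κ] (hκμ : κ ∘ₘ μ = μ) {F : ι → Set E}
    (hcover : ⋃ r, F r = univ) (hdisj : ∀ a b, a ≠ b → Disjoint (F a) (F b))
    (hD : ∀ r, ∀ x ∉ F r, κ x (F r) = 0) {r : ι} (hF : MeasurableSet (F r)) (hμF : μ (F r) ≠ 0)
    {f : E → ℝ} (hf : BddMeasurable f) {q : ℝ} (hq : 1 ≤ q) :
    locNorm (muLoc μ (F r)) q (fun x => ∫ y, f y ∂κ x) ≤ locNorm (muLoc μ (F r)) q f := by
  have hq₀ : 0 < q := by linarith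
  have hfq := hf.abs_rpow hq₀.le
  have hin : ∀ x ∈ F r, κ x (F r)ᶜ = 0 := fun x hx =>
    measure_compl_eq_zero_of_iUnion_eq_univ hcover fun r' hr' =>
      hD r' x fun hx' => disjoint_left.1 (hdisj r' r hr') hx' hx
  rw [locNorm_muLoc_le_iff hμF hq₀ (locNorm_nonneg _ _ _)]
  calc ∫ x in F r, |∫ y, f y ∂κ x| ^ q ∂μ ≤ ∫ x in F r, ∫ y, |f y| ^ q ∂κ x ∂μ :=
        setIntegral_mono (((hf.integral_kernel κ).abs_rpow hq₀.le).integrable _).integrableOn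
          ((hfq.integral_kernel κ).integrable _).integrableOn
          fun x => abs_integral_rpow_le hq (hf.integrable _) (hfq.integrable _)
    _ = ∫ x in F r, |f x| ^ q ∂μ := setIntegral_integral_kernel_of_comp_eq hκμ hF (hD r) hin hfq
    _ ≤ _ := (locNorm_muLoc_le_iff hμF hq₀ (locNorm_nonneg _ _ _)).1 le_rfl

theorem setIntegral_div_mul_eq_of_density {μ ν : Measure E} {g : E → ℝ}
    (hdens : ∀ f : E → ℝ, BddMeasurable f →
      ∫ x, f x ∂ν = (∫ x, f x * g x ∂μ) / ∫ x, g x ∂μ)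
    {S : Set E} (hS : MeasurableSet S) {u : E → ℝ} (hu : BddMeasurable u) :
    ∫ x in S, g x / (∫ z, g z ∂μ) * u x ∂μ = ∫ x in S, u x ∂ν := by
  rw [← integral_indicator hS, ← integral_indicator hS, hdens _ (hu.indicator hS),
    ← integral_div]
  congr 1
  funext x
  by_cases hx : x ∈ S
  · simp only [indicator_of_mem hx]
    ring
  · simp only [indicator_of_notMem hx, zero_mul, zero_div]

theorem locNorm_mul_le_of_density {μ ν : Measure E} [IsFiniteMeasure μ] [IsFiniteMeasure ν]
    {S : Set E} (hS : MeasurableSet S) (hμS : μ S ≠ 0) (hνS : ν S ≠ 0)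
    {G h : E → ℝ} (hG : BddMeasurable G) (hG₀ : ∀ x, 0 ≤ G x) (hh : BddMeasurable h)
    {p γ : ℝ} (hp : 1 ≤ p) (hγ : 0 ≤ γ)
    (hGγ : ∀ x ∈ S, (μ S).toReal / (ν S).toReal * G x ≤ γ)
    (hdens : ∫ x in S, G x * |h x| ^ p ∂μ = ∫ x in S, |h x| ^ p ∂ν) :
    locNorm (muLoc μ S) p (fun x => G x * h x)
      ≤ γ ^ ((p - 1) / p) * ((ν S).toReal / (μ S).toReal) * locNorm (muLoc ν S) p h := by
  set a := (μ S).toReal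
  set b := (ν S).toReal
  set X := locNorm (muLoc ν S) p h
  have ha : 0 < a := ENNReal.toReal_pos hμS (measure_ne_top _ _)
  have hb : 0 < b := ENNReal.toReal_pos hνS (measure_ne_top _ _)
  have hp₀ : 0 < p := by linarith
  have hX : ∫ x in S, |h x| ^ p ∂ν ≤ b * X ^ p :=
    (locNorm_muLoc_le_iff hνS hp₀ (locNorm_nonneg _ _ _)).1 le_rfl
  have hGle : ∀ x ∈ S, G x ≤ γ * (b / a) := fun x hx => by
    have := hGγ x hx
    rw [div_mul_eq_mul_div, div_le_iff₀ hb] at this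
    rw [mul_div_assoc', le_div_iff₀ ha]
    linarith
  have hpt : ∀ x ∈ S, |G x * h x| ^ p ≤ (γ * (b / a)) ^ (p - 1) * (G x * |h x| ^ p) := by
    intro x hx
    have hGp : G x ^ p = G x ^ (p - 1) * G x := by
      rw [← Real.rpow_add_one' (hG₀ x) (by linarith), sub_add_cancel]
    rw [abs_mul, abs_of_nonneg (hG₀ x), Real.mul_rpow (hG₀ x) (abs_nonneg _), hGp, mul_assoc]
    exact mul_le_mul_of_nonneg_right (Real.rpow_le_rpow (hG₀ x) (hGle x hx) (by linarith))
      (mul_nonneg (hG₀ x) (by positivity))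
  have hpow : (γ ^ ((p - 1) / p) * (b / a) * X) ^ p = γ ^ (p - 1) * (b / a) ^ p * X ^ p := by
    rw [Real.mul_rpow (by positivity) (locNorm_nonneg _ _ _),
      Real.mul_rpow (by positivity) (by positivity), ← Real.rpow_mul hγ,
      div_mul_cancel₀ _ hp₀.ne']
  rw [locNorm_muLoc_le_iff hμS hp₀ (mul_nonneg (by positivity) (locNorm_nonneg _ _ _)), hpow]
  calc ∫ x in S, |G x * h x| ^ p ∂μ
      ≤ ∫ x in S, (γ * (b / a)) ^ (p - 1) * (G x * |h x| ^ p) ∂μ :=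
        setIntegral_mono_on ((hG.mul hh).abs_rpow hp₀.le |>.integrable _).integrableOn
          ((hG.mul (hh.abs_rpow hp₀.le)).integrable _ |>.const_mul _).integrableOn hS hpt
    _ = (γ * (b / a)) ^ (p - 1) * ∫ x in S, |h x| ^ p ∂ν := by rw [integral_const_mul, hdens]
    _ ≤ (γ * (b / a)) ^ (p - 1) * (b * X ^ p) := by gcongr
    _ = a * (γ ^ (p - 1) * (b / a) ^ p * X ^ p) := by
        rw [Real.mul_rpow hγ (by positivity), Real.rpow_sub_one (x := b / a) (by positivity)]
        field_simp

theorem locNorm_biUnion_le {ν : Measure E} [IsFiniteMeasure ν] {ι : Type*} {s : Finset ι}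
    {T : ι → Set E} (hT : ∀ l ∈ s, MeasurableSet (T l)) (hdisj : (s : Set ι).PairwiseDisjoint T)
    (hT₀ : ∀ l ∈ s, ν (T l) ≠ 0) (hS : ν (⋃ l ∈ s, T l) ≠ 0) {h : E → ℝ} (hh : BddMeasurable h)
    {p D : ℝ} (hp : 0 < p) (hD : 0 ≤ D) (hle : ∀ l ∈ s, locNorm (muLoc ν (T l)) p h ≤ D) :
    locNorm (muLoc ν (⋃ l ∈ s, T l)) p h ≤ D := by
  rw [locNorm_muLoc_le_iff hS hp hD, integral_biUnion_finset s hT hdisj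
    fun l _ => ((hh.abs_rpow hp.le).integrable ν).integrableOn, measure_biUnion_finset hdisj hT,
    ENNReal.toReal_sum fun _ _ => measure_ne_top _ _, Finset.sum_mul]
  exact Finset.sum_le_sum fun l hl => (locNorm_muLoc_le_iff (hT₀ l hl) hp hD).1 (hle l hl)

section Tree

variable {F : ∀ k, I k → Set E} {p : ∀ j k : ℕ, I k → I j}

omit [∀ k, Nonempty (I k)] in
@[simp]
theorem mem_succSet {j k : ℕ} {i : I j} {l : I k} : l ∈ succSet p j k i ↔ p j k l = i := by
  simp [succSet]

omit [MeasurableSpace E] [∀ k, Nonempty (I k)] in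
theorem biUnion_succSet_eq {j k : ℕ} (hcover : ⋃ l, F k l = univ)
    (hdisj : ∀ a b : I j, a ≠ b → Disjoint (F j a) (F j b))
    (hsub : ∀ l, F k l ⊆ F j (p j k l)) (i : I j) :
    ⋃ l ∈ succSet p j k i, F k l = F j i := by
  ext x
  simp only [mem_iUnion, mem_succSet, exists_prop]
  constructor
  · rintro ⟨l, rfl, hx⟩
    exact hsub l hx
  · intro hx
    obtain ⟨l, hl⟩ := mem_iUnion.1 (hcover ▸ mem_univ x : x ∈ ⋃ l, F k l)
    refine ⟨l, ?_, hl⟩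
    by_contra h
    exact disjoint_left.1 (hdisj _ _ h) (hsub l hl) hx

omit [MeasurableSpace E] [∀ k, Fintype (I k)] [∀ k, Nonempty (I k)] in
theorem pred_eq_pred_pred {j m k : ℕ} (hdisj : ∀ a b : I j, a ≠ b → Disjoint (F j a) (F j b))
    {r : I k} (hr : (F k r).Nonempty) (hjk : F k r ⊆ F j (p j k r))
    (hmk : F k r ⊆ F m (p m k r)) (hjm : F m (p m k r) ⊆ F j (p j m (p m k r))) :
    p j k r = p j m (p m k r) := by
  obtain ⟨x, hx⟩ := hr
  by_contra h
  exact disjoint_left.1 (hdisj _ _ h) (hjk hx) (hjm (hmk hx))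

omit [∀ k, Nonempty (I k)] in
theorem succSet_subset_succSet {j m k : ℕ} (hcompat : ∀ r : I k, p j k r = p j m (p m k r))
    {i : I j} {l : I m} (hl : l ∈ succSet p j m i) : succSet p m k l ⊆ succSet p j k i := by
  intro r hr
  rw [mem_succSet] at hl hr ⊢
  rw [hcompat, hr, hl]

omit [∀ k, Fintype (I k)] [∀ k, Nonempty (I k)] [∀ k, DecidableEq (I k)] in
theorem mRatio_nonneg (μ : ℕ → Measure E) (F : ∀ k, I k → Set E) (k : ℕ) (j : I k) :
    0 ≤ mRatio μ F k j :=
  div_nonneg ENNReal.toReal_nonneg ENNReal.toReal_nonneg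

omit [∀ k, Fintype (I k)] [∀ k, Nonempty (I k)] [∀ k, DecidableEq (I k)] in
theorem Mprod_nonneg (μ : ℕ → Measure E) (j k : ℕ) (l : I k) : 0 ≤ Mprod μ F p j k l :=
  Finset.prod_nonneg fun _ _ => mRatio_nonneg _ _ _ _

omit [∀ k, Nonempty (I k)] in
theorem mRatio_mul_sup'_Mprod_le {μ : ℕ → Measure E} {j k : ℕ} (hjk : j < k)
    (hcompat : ∀ r : I k, p j k r = p j (j + 1) (p (j + 1) k r)) {i : I j} {l : I (j + 1)}
    (hl : l ∈ succSet p j (j + 1) i) (hl' : (succSet p (j + 1) k l).Nonempty)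
    (hi : (succSet p j k i).Nonempty) :
    mRatio μ F j i * (succSet p (j + 1) k l).sup' hl' (Mprod μ F p (j + 1) k)
      ≤ (succSet p j k i).sup' hi (Mprod μ F p j k) := by
  obtain ⟨r, hr, hmax⟩ := Finset.exists_mem_eq_sup' hl' (Mprod μ F p (j + 1) k)
  have hri := succSet_subset_succSet hcompat hl hr
  have hsplit : Mprod μ F p j k r = mRatio μ F j i * Mprod μ F p (j + 1) k r := by
    rw [Mprod, Finset.prod_eq_prod_Ico_succ_bot hjk, mem_succSet.1 hri, Mprod]
  rw [hmax, ← hsplit]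
  exact Finset.le_sup' _ hri

omit [∀ k, Nonempty (I k)] in
theorem mRatio_mul_le_of_mem_succSet {μ : ℕ → Measure E} {j k : ℕ} (hjk : j < k)
    (hcompat : ∀ r : I k, p j k r = p j (j + 1) (p (j + 1) k r)) {i : I j} {l : I (j + 1)}
    (hl : l ∈ succSet p j (j + 1) i) (hl' : (succSet p (j + 1) k l).Nonempty)
    (hi : (succSet p j k i).Nonempty) {δ : ℝ} (hδ : 0 ≤ δ) {φ ψ : I k → ℝ}
    (hφ₀ : ∀ r, 0 ≤ φ r) (hφψ : ∀ r, φ r ≤ ψ r) :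
    mRatio μ F j i * (δ * (succSet p (j + 1) k l).sup' hl' (Mprod μ F p (j + 1) k)
        * (succSet p (j + 1) k l).sup' hl' φ)
      ≤ δ * (succSet p j k i).sup' hi (Mprod μ F p j k) * (succSet p j k i).sup' hi ψ := by
  have ⟨r, hr⟩ := hl'
  have hM := mRatio_mul_sup'_Mprod_le (μ := μ) (F := F) hjk hcompat hl hl' hi
  have hM₀ : 0 ≤ δ * (succSet p j k i).sup' hi (Mprod μ F p j k) :=
    mul_nonneg hδ ((mul_nonneg (mRatio_nonneg _ _ _ _)
      (Finset.le_sup'_of_le _ hr (Mprod_nonneg _ _ _ _))).trans hM)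
  have hφ : (succSet p (j + 1) k l).sup' hl' φ ≤ (succSet p j k i).sup' hi ψ :=
    Finset.sup'_le _ _ fun r hr =>
      Finset.le_sup'_of_le ψ (succSet_subset_succSet hcompat hl hr) (hφψ r)
  calc mRatio μ F j i * (δ * (succSet p (j + 1) k l).sup' hl' (Mprod μ F p (j + 1) k)
        * (succSet p (j + 1) k l).sup' hl' φ)
      = δ * (mRatio μ F j i * (succSet p (j + 1) k l).sup' hl' (Mprod μ F p (j + 1) k))
        * (succSet p (j + 1) k l).sup' hl' φ := by ring
    _ ≤ _ := mul_le_mul (mul_le_mul_of_nonneg_left hM hδ) hφ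
        (Finset.le_sup'_of_le φ hr (hφ₀ r)) hM₀

end Tree

theorem locNorm_mul_le_of_biUnion {μ ν : Measure E} [IsFiniteMeasure μ] [IsFiniteMeasure ν]
    {ι : Type*} {s : Finset ι} {T : ι → Set E} (hT : ∀ l ∈ s, MeasurableSet (T l))
    (hdisj : (s : Set ι).PairwiseDisjoint T) (hT₀ : ∀ l ∈ s, ν (T l) ≠ 0)
    {S : Set E} (hST : ⋃ l ∈ s, T l = S) (hμS : μ S ≠ 0) (hνS : ν S ≠ 0)
    {G h : E → ℝ} (hG : BddMeasurable G) (hG₀ : ∀ x, 0 ≤ G x) (hh : BddMeasurable h)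
    {p γ B : ℝ} (hp : 1 ≤ p) (hγ : 0 ≤ γ)
    (hGγ : ∀ x ∈ S, (μ S).toReal / (ν S).toReal * G x ≤ γ)
    (hdens : ∫ x in S, G x * |h x| ^ p ∂μ = ∫ x in S, |h x| ^ p ∂ν)
    (hle : ∀ l ∈ s, (ν S).toReal / (μ S).toReal * locNorm (muLoc ν (T l)) p h ≤ B) :
    locNorm (muLoc μ S) p (fun x => G x * h x) ≤ γ ^ ((p - 1) / p) * B := by
  set m := (ν S).toReal / (μ S).toReal
  have hm : 0 < m :=
    div_pos (ENNReal.toReal_pos hνS (measure_ne_top _ _))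
      (ENNReal.toReal_pos hμS (measure_ne_top _ _))
  have hS : MeasurableSet S := hST ▸ Finset.measurableSet_biUnion s hT
  have hB : 0 ≤ B := by
    obtain ⟨l, hl⟩ : s.Nonempty := Finset.nonempty_iff_ne_empty.2 fun h => hνS (by simp [← hST, h])
    exact (mul_nonneg hm.le (locNorm_nonneg _ _ _)).trans (hle l hl)
  have hνh : locNorm (muLoc ν S) p h ≤ B / m := by
    rw [← hST] at hνS ⊢
    exact locNorm_biUnion_le hT hdisj hT₀ hνS hh (by linarith) (div_nonneg hB hm.le)
      fun l hl => (le_div_iff₀' hm).2 (hle l hl)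
  calc locNorm (muLoc μ S) p (fun x => G x * h x)
      ≤ γ ^ ((p - 1) / p) * m * locNorm (muLoc ν S) p h :=
        locNorm_mul_le_of_density hS hμS hνS hG hG₀ hh hp hγ hGγ hdens
    _ ≤ γ ^ ((p - 1) / p) * m * (B / m) := by gcongr
    _ = γ ^ ((p - 1) / p) * B := by field_simp

theorem bddMeasurable_qhat (κ : ℕ → Kernel E E) [∀ m, IsMarkovKernel (κ m)] (w : ℕ → E → ℝ)
    (hw : ∀ m, BddMeasurable (w m)) (qhat : ℕ → ℕ → (E → ℝ) → E → ℝ) {k : ℕ}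
    (hqdiag : ∀ f, qhat k k f = f)
    (hqstep : ∀ m < k, ∀ (f : E → ℝ) (x : E),
      qhat m k f x = ∫ y, w m y * qhat (m + 1) k f y ∂(κ m x))
    {f : E → ℝ} (hf : BddMeasurable f) {m : ℕ} (hm : m ≤ k) : BddMeasurable (qhat m k f) := by
  refine Nat.decreasingInduction (motive := fun m _ => BddMeasurable (qhat m k f))
    (fun m hmk ih => ?_) (by rwa [hqdiag]) hm
  rw [show qhat m k f = _ from funext (hqstep m hmk f)]
  exact ((hw m).mul ih).integral_kernel (κ m)

omit [∀ k, DecidableEq (I k)] in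
theorem maxNorm_le_of_forall_le {μ : ℕ → Measure E} {F : ∀ k, I k → Set E} {j k : ℕ}
    {s : I j → Finset (I k)} (hs : ∀ i, (s i).Nonempty) {M : I k → ℝ} (hM : ∀ r, 0 ≤ M r)
    {c p q : ℝ} (hc : 0 ≤ c) {φ f : E → ℝ}
    (h : ∀ i, locNorm (muLoc (μ j) (F j i)) p φ
      ≤ c * (s i).sup' (hs i) M * (s i).sup' (hs i) fun r => locNorm (muLoc (μ k) (F k r)) q f) :
    maxNorm μ F j p φ
      ≤ c * (Finset.univ.sup' Finset.univ_nonempty fun i => (s i).sup' (hs i) M)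
        * maxNorm μ F k q f := by
  refine Finset.sup'_le _ _ fun i _ => (h i).trans ?_
  obtain ⟨r, hr⟩ := hs i
  have hMi : 0 ≤ (s i).sup' (hs i) M := (hM r).trans (Finset.le_sup' M hr)
  have hNi : 0 ≤ (s i).sup' (hs i) fun r => locNorm (muLoc (μ k) (F k r)) q f :=
    (locNorm_nonneg _ _ _).trans (Finset.le_sup' (fun r => locNorm _ q f) hr)
  have hMA := Finset.le_sup' (fun i => (s i).sup' (hs i) M) (Finset.mem_univ i)
  have hNmax : ((s i).sup' (hs i) fun r => locNorm (muLoc (μ k) (F k r)) q f)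
      ≤ maxNorm μ F k q f := Finset.sup'_le _ _ fun r _ =>
    Finset.le_sup' (fun r => locNorm (muLoc (μ k) (F k r)) q f) (Finset.mem_univ r)
  exact mul_le_mul (mul_le_mul_of_nonneg_left hMA hc) hNmax hNi
    (mul_nonneg hc (hMi.trans hMA))

theorem stmt_18_general
    (n : ℕ) (μ : ℕ → Measure E)
    (hμprob : ∀ k, k ≤ n → IsProbabilityMeasure (μ k))
    (hμac : ∀ j k, j ≤ n → k ≤ n → μ j ≪ μ k)
    (g : ℕ → E → ℝ)
    (hgmeas : ∀ k, Measurable (g k))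
    (hgpos : ∀ k x, 0 < g k x)
    (hgbdd : ∀ k, ∃ C : ℝ, ∀ x, g k x ≤ C)
    (hgdens : ∀ k, k < n → ∀ f : E → ℝ, Measurable f → (∃ C : ℝ, ∀ x, |f x| ≤ C) →
      (∫ x, f x ∂(μ (k+1))) = (∫ x, f x * g k x ∂(μ k)) / (∫ x, g k x ∂(μ k)))
    (K : ℕ → E → Measure E)
    (hKprob : ∀ k x, IsProbabilityMeasure (K k x))
    (hKmeas : ∀ k (A : Set E), MeasurableSet A → Measurable fun x => K k x A)
    (hKinv : ∀ k, k ≤ n → (μ k).bind (K k) = μ k)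
    (F : ∀ k, I k → Set E)
    (hFmeas : ∀ k j, MeasurableSet (F k j))
    (hFpos : ∀ k, k ≤ n → ∀ j, 0 < μ 0 (F k j))
    (hFdisj : ∀ k, k ≤ n → ∀ j j' : I k, j ≠ j' → Disjoint (F k j) (F k j'))
    (hFcover : ∀ k, k ≤ n → (⋃ j : I k, F k j) = Set.univ)
    (p : ∀ j k : ℕ, I k → I j)
    (hp : ∀ j k, j < k → k ≤ n → ∀ l : I k, F k l ⊆ F j (p j k l))
    (hsne : ∀ (j k : ℕ) (_ : j < k) (_ : k ≤ n) (i : I j), (succSet p j k i).Nonempty)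
    (hD : ∀ k, 1 ≤ k → k ≤ n → ∀ (j : I k) (x : E), x ∉ F k j → K k x (F k j) = 0)
    (qhat : ℕ → ℕ → (E → ℝ) → E → ℝ)
    (hqdiag : ∀ k f, qhat k k f = f)
    (hqstep : ∀ j k, j < k → k ≤ n → ∀ (f : E → ℝ) (x : E),
      qhat j k f x = ∫ y, (g j y / (∫ z, g j z ∂(μ j))) * qhat (j+1) k f y ∂(K j x))
    (γ : ℝ) (hγ : 1 ≤ γ)
    (hB : ∀ k, k < n → ∀ (j : I k) (x : E), x ∈ F k j →
      ((μ k (F k j)).toReal / (μ (k+1) (F k j)).toReal)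
        * (g k x / (∫ z, g k z ∂(μ k))) ≤ γ)
    (preal qreal : ℝ) (hpreal : 1 ≤ preal) (hqreal : 1 ≤ qreal)
    (j k : ℕ) (hjk : j + 1 < k) (hkn : k ≤ n)
    (δ : ℝ) (hδ : 0 ≤ δ)
    (hhyp : ∀ (l : I (j+1)) (f : E → ℝ), Measurable f → (∃ C : ℝ, ∀ x, |f x| ≤ C) →
      locNorm (muLoc (μ (j+1)) (F (j+1) l)) preal (qhat (j+1) k f)
        ≤ δ * ((succSet p (j+1) k l).sup' (hsne (j+1) k hjk hkn l) (Mprod μ F p (j+1) k))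
          * ((succSet p (j+1) k l).sup' (hsne (j+1) k hjk hkn l) fun s =>
              locNorm (muLoc (μ k) (F k s)) qreal f)) :
    ∀ (i : I j) (f : E → ℝ), Measurable f → (∃ C : ℝ, ∀ x, |f x| ≤ C) →
      (locNorm (muLoc (μ j) (F j i)) preal (qFull μ g K qhat j k f)
        ≤ γ ^ ((preal - 1)/preal) * δ
          * ((succSet p j k i).sup' (hsne j k (Nat.lt_of_succ_lt hjk) hkn i) (Mprod μ F p j k))
          * ((succSet p j k i).sup' (hsne j k (Nat.lt_of_succ_lt hjk) hkn i) fun s =>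
              locNorm (muLoc (μ k) (F k s)) qreal f))
      ∧ maxNorm μ F j preal (qFull μ g K qhat j k f)
          ≤ γ ^ ((preal - 1)/preal) * δ
            * (Finset.univ.sup' Finset.univ_nonempty fun i' : I j =>
                (succSet p j k i').sup' (hsne j k (Nat.lt_of_succ_lt hjk) hkn i') (Mprod μ F p j k))
            * maxNorm μ F k qreal f := by
  intro i f hf hfb
  have hjn : j < n := by omega
  have := hμprob j hjn.le
  have := hμprob (j + 1) hjn
  have := hμprob k hkn
  have hcell : ∀ m ≤ n, ∀ k' ≤ n, ∀ l : I k', μ m (F k' l) ≠ 0 := fun m hm k' hk' l h0 =>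
    (hFpos k' hk' l).ne' (hμac 0 m (Nat.zero_le n) hm h0)
  let κ : ℕ → Kernel E E := fun m => ⟨K m, Measure.measurable_of_measurable_coe _ (hKmeas m)⟩
  have : ∀ m, IsMarkovKernel (κ m) := fun m => ⟨hKprob m⟩
  have hgbar : ∀ m, BddMeasurable fun x => g m x / (∫ z, g m z ∂(μ m)) := fun m => by
    obtain ⟨C, hC⟩ := hgbdd m
    exact .div_const ⟨hgmeas m, C, fun x => (abs_of_pos (hgpos m x)).trans_le (hC x)⟩ _
  have hgbar₀ : ∀ x, 0 ≤ g j x / ∫ z, g j z ∂(μ j) := fun x =>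
    div_nonneg (hgpos j x).le (integral_nonneg fun z => (hgpos j z).le)
  have hKf : BddMeasurable fun y => ∫ z, f z ∂(K k y) := .integral_kernel ⟨hf, hfb⟩ (κ k)
  have hh :=
    bddMeasurable_qhat κ _ hgbar qhat (hqdiag k) (fun m hm => hqstep m k hm hkn) hKf hjk.le
  have hcontr : ∀ r, locNorm (muLoc (μ k) (F k r)) qreal (fun y => ∫ z, f z ∂(K k y))
      ≤ locNorm (muLoc (μ k) (F k r)) qreal f := fun r =>
    locNorm_integral_kernel_le (κ := κ k) (hKinv k hkn) (hFcover k hkn) (hFdisj k hkn)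
      (hD k (by omega) hkn) (hFmeas k r) (hcell k hkn k hkn r) ⟨hf, hfb⟩ hqreal
  have hcompat : ∀ r : I k, p j k r = p j (j + 1) (p (j + 1) k r) := fun r =>
    pred_eq_pred_pred (hFdisj j hjn.le)
      (nonempty_of_measure_ne_zero (hcell 0 (Nat.zero_le n) k hkn r))
      (hp j k (by omega) hkn r) (hp (j + 1) k hjk hkn r) (hp j (j + 1) j.lt_succ_self hjn _)
  have key : ∀ i', locNorm (muLoc (μ j) (F j i')) preal (qFull μ g K qhat j k f)
      ≤ γ ^ ((preal - 1)/preal) * δ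
        * ((succSet p j k i').sup' (hsne j k (Nat.lt_of_succ_lt hjk) hkn i') (Mprod μ F p j k))
        * ((succSet p j k i').sup' (hsne j k (Nat.lt_of_succ_lt hjk) hkn i') fun s =>
            locNorm (muLoc (μ k) (F k s)) qreal f) := fun i' => by
    have hsplit := biUnion_succSet_eq (hFcover (j + 1) hjn) (hFdisj j hjn.le)
      (hp j (j + 1) j.lt_succ_self hjn) i'
    have hdens := setIntegral_div_mul_eq_of_density (fun f hf => hgdens j hjn f hf.1 hf.2)
      (hFmeas j i') (hh.abs_rpow (by linarith : (0 : ℝ) ≤ preal))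
    rw [mul_assoc (γ ^ _) δ, mul_assoc (γ ^ _)]
    refine locNorm_mul_le_of_biUnion (fun l _ => hFmeas (j + 1) l)
      (fun a _ b _ hab => hFdisj (j + 1) hjn a b hab) (fun l _ => hcell _ hjn _ hjn l) hsplit
      (hcell j hjn.le j hjn.le i') (hcell (j + 1) hjn j hjn.le i') (hgbar j) hgbar₀ hh hpreal
      (by linarith) (hB j hjn i') hdens fun l hl => ?_
    exact (mul_le_mul_of_nonneg_left (hhyp l _ hKf.1 hKf.2) (mRatio_nonneg _ _ _ _)).trans
      (mRatio_mul_le_of_mem_succSet (by omega) hcompat hl _ _ hδ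
        (fun _ => locNorm_nonneg _ _ _) hcontr)
  exact ⟨key i, maxNorm_le_of_forall_le _ (Mprod_nonneg _ _ _) (by positivity) key⟩

theorem stmt_18
    (n : ℕ) (μ : ℕ → Measure E)
    (hμprob : ∀ k, k ≤ n → IsProbabilityMeasure (μ k))
    (hμac : ∀ j k, j ≤ n → k ≤ n → μ j ≪ μ k)
    (g : ℕ → E → ℝ)
    (hgmeas : ∀ k, Measurable (g k))
    (hgpos : ∀ k x, 0 < g k x)
    (hgbdd : ∀ k, ∃ C : ℝ, ∀ x, g k x ≤ C)
    (hgdens : ∀ k, k < n → ∀ f : E → ℝ, Measurable f → (∃ C : ℝ, ∀ x, |f x| ≤ C) →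
      (∫ x, f x ∂(μ (k+1))) = (∫ x, f x * g k x ∂(μ k)) / (∫ x, g k x ∂(μ k)))
    (K : ℕ → E → Measure E)
    (hKprob : ∀ k x, IsProbabilityMeasure (K k x))
    (hKmeas : ∀ k (A : Set E), MeasurableSet A → Measurable fun x => K k x A)
    (hKinv : ∀ k, k ≤ n → (μ k).bind (K k) = μ k)
    (F : ∀ k, I k → Set E)
    (hFmeas : ∀ k j, MeasurableSet (F k j))
    (hFpos : ∀ k, k ≤ n → ∀ j, 0 < μ 0 (F k j))
    (hFdisj : ∀ k, k ≤ n → ∀ j j' : I k, j ≠ j' → Disjoint (F k j) (F k j'))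
    (hFcover : ∀ k, k ≤ n → (⋃ j : I k, F k j) = Set.univ)
    (p : ∀ j k : ℕ, I k → I j)
    (hp : ∀ j k, j < k → k ≤ n → ∀ l : I k, F k l ⊆ F j (p j k l))
    (hsne : ∀ (j k : ℕ) (_ : j < k) (_ : k ≤ n) (i : I j), (succSet p j k i).Nonempty)
    (hD : ∀ k, 1 ≤ k → k ≤ n → ∀ (j : I k) (x : E), x ∉ F k j → K k x (F k j) = 0)
    (qhat : ℕ → ℕ → (E → ℝ) → E → ℝ)
    (hqdiag : ∀ k f, qhat k k f = f)
    (hqstep : ∀ j k, j < k → k ≤ n → ∀ (f : E → ℝ) (x : E),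
      qhat j k f x = ∫ y, (g j y / (∫ z, g j z ∂(μ j))) * qhat (j+1) k f y ∂(K j x))
    (γ : ℝ) (hγ : 1 ≤ γ)
    (hB : ∀ k, k < n → ∀ (j : I k) (x : E), x ∈ F k j →
      ((μ k (F k j)).toReal / (μ (k+1) (F k j)).toReal)
        * (g k x / (∫ z, g k z ∂(μ k))) ≤ γ)
    (preal qreal : ℝ) (hpreal : 1 ≤ preal) (hqreal : 1 ≤ qreal)
    (j k : ℕ) (hj : 1 ≤ j) (hjk : j + 1 < k) (hkn : k ≤ n)
    (δ : ℝ) (hδ : 0 ≤ δ)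
    (hhyp : ∀ (l : I (j+1)) (f : E → ℝ), Measurable f → (∃ C : ℝ, ∀ x, |f x| ≤ C) →
      locNorm (muLoc (μ (j+1)) (F (j+1) l)) preal (qhat (j+1) k f)
        ≤ δ * ((succSet p (j+1) k l).sup' (hsne (j+1) k hjk hkn l) (Mprod μ F p (j+1) k))
          * ((succSet p (j+1) k l).sup' (hsne (j+1) k hjk hkn l) fun s =>
              locNorm (muLoc (μ k) (F k s)) qreal f)) :
    ∀ (i : I j) (f : E → ℝ), Measurable f → (∃ C : ℝ, ∀ x, |f x| ≤ C) →
      (locNorm (muLoc (μ j) (F j i)) preal (qFull μ g K qhat j k f)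
        ≤ γ ^ ((preal - 1)/preal) * δ
          * ((succSet p j k i).sup' (hsne j k (Nat.lt_of_succ_lt hjk) hkn i) (Mprod μ F p j k))
          * ((succSet p j k i).sup' (hsne j k (Nat.lt_of_succ_lt hjk) hkn i) fun s =>
              locNorm (muLoc (μ k) (F k s)) qreal f))
      ∧ maxNorm μ F j preal (qFull μ g K qhat j k f)
          ≤ γ ^ ((preal - 1)/preal) * δ
            * (Finset.univ.sup' Finset.univ_nonempty fun i' : I j =>
                (succSet p j k i').sup' (hsne j k (Nat.lt_of_succ_lt hjk) hkn i') (Mprod μ F p j k))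
            * maxNorm μ F k qreal f :=
  stmt_18_general n μ hμprob hμac g hgmeas hgpos hgbdd hgdens K hKprob hKmeas hKinv F hFmeas hFpos
    hFdisj hFcover p hp hsne hD qhat hqdiag hqstep γ hγ hB preal qreal hpreal hqreal j k hjk hkn δ
    hδ hhyp
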